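/- arXiv:math/0210467 — 5 statements merged into one kernel-verified Lean document; each statement's English description precedes it below -/
import Mathlib

section
/- Let G be a group, A a unital C*-algebra with a tracial state τ, u : G → U(A) a group homomorphism from G into the unitary group of A, and φ : A → A a completely positive linear map, i.e. for every n ≥ 1 the entrywise application of φ to n×n matrices over A maps positive elements of Mₙ(A) to positive elements. Then the function g ↦ τ(φ(u(g)) u(g)*) is positive definite on G. -/
open Matrix
open scoped ComplexOrder

/-- A linear map `φ : A → A` on a C*-algebra is completely positive if, for every `n`,
its entrywise application to `n × n` matrices over `A` maps positive matrices (those of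
the form `Nᴴ * N`) to positive matrices. -/
def IsCompletelyPositive {A : Type*} [NormedRing A] [StarRing A] [CStarRing A]
    [NormedAlgebra ℂ A] [StarModule ℂ A] [CompleteSpace A] (φ : A →ₗ[ℂ] A) : Prop :=
  ∀ (n : ℕ) (M : Matrix (Fin n) (Fin n) A),
    (∃ N : Matrix (Fin n) (Fin n) A, M = Nᴴ * N) →
      ∃ N' : Matrix (Fin n) (Fin n) A, M.map φ = N'ᴴ * N'

/-- A function `φ : G → ℂ` is positive definite if for every `n` and every tuple
`g : Fin n → G` the matrix `(φ ((g i)⁻¹ * g j))ᵢⱼ` is positive semidefinite. -/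
def IsPosDefFn {G : Type*} [Group G] (φ : G → ℂ) : Prop :=
  ∀ (n : ℕ) (g : Fin n → G), (Matrix.of fun i j : Fin n => φ ((g i)⁻¹ * g j)).PosSemidef

section Aux
variable {A : Type*} [NormedRing A] [StarRing A] [CStarRing A]
    [NormedAlgebra ℂ A] [StarModule ℂ A] [CompleteSpace A]
    (τ : A →ₗ[ℂ] ℂ) (hpos : ∀ x : A, 0 ≤ τ (star x * x))

include hpos in
lemma tau_star_swap (x y : A) :
    (starRingEnd ℂ) (τ (star x * y)) = τ (star y * x) := by
  have hreal : ∀ z : A, (starRingEnd ℂ) (τ (star z * z)) = τ (star z * z) := by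
    intro z
    have h := hpos z
    rw [Complex.le_def] at h
    rw [Complex.conj_eq_iff_im]
    exact h.2.symm
  have e1 := hreal (x + y)
  have e2 := hreal (x + Complex.I • y)
  have hx := hreal x
  have hy := hreal y
  simp only [star_add, star_smul, add_mul, mul_add, map_add, smul_mul_assoc,
    mul_smul_comm, LinearMap.map_smul, smul_eq_mul, Complex.star_def, _root_.map_mul, map_neg, neg_mul, mul_neg, neg_neg,
    Complex.conj_conj, Complex.conj_I] at e1 e2
  have hI := Complex.I_mul_I
  linear_combination (e1 - hx - hy)/2 + Complex.I*(e2 - hx)/2 +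
    (-(((starRingEnd ℂ) (τ (star y * x)) - (starRingEnd ℂ) (τ (star x * y)) +
        τ (star y * x) - τ (star x * y))/2) -
      Complex.I*(τ (star y * y) - (starRingEnd ℂ) (τ (star y * y)))/2) * hI -
    (Complex.I/2) * hy

include hpos in
lemma gram_posSemidef {n m : ℕ} (a : Fin m → Fin n → A) :
    (Matrix.of fun i j : Fin n => ∑ k, τ (star (a k i) * a k j)).PosSemidef := by
  refine posSemidef_iff_dotProduct_mulVec.mpr ⟨?_, ?_⟩
  · ext i j
    simp only [conjTranspose_apply, of_apply, star_sum, Complex.star_def, map_sum]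
    exact Finset.sum_congr rfl fun k _ => tau_star_swap τ hpos _ _
  · intro x
    have expand : ∀ k : Fin m, τ (star (∑ i, x i • a k i) * (∑ j, x j • a k j))
        = ∑ i, ∑ j, star (x i) * x j * τ (star (a k i) * a k j) := by
      intro k
      rw [star_sum, Finset.sum_mul_sum, map_sum]
      refine Finset.sum_congr rfl fun i _ => ?_
      rw [map_sum]
      refine Finset.sum_congr rfl fun j _ => ?_
      rw [star_smul, smul_mul_smul_comm, LinearMap.map_smul, smul_eq_mul]
    have key : star x ⬝ᵥ ((Matrix.of fun i j : Fin n => ∑ k, τ (star (a k i) * a k j)) *ᵥ x)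
        = ∑ k, τ (star (∑ i, x i • a k i) * (∑ j, x j • a k j)) := by
      calc star x ⬝ᵥ ((Matrix.of fun i j : Fin n => ∑ k, τ (star (a k i) * a k j)) *ᵥ x)
          = ∑ i, ∑ j, ∑ k, star (x i) * x j * τ (star (a k i) * a k j) := by
            simp only [dotProduct, mulVec, dotProduct, of_apply, Pi.star_apply,
              Finset.mul_sum, Finset.sum_mul]
            exact Finset.sum_congr rfl fun i _ => Finset.sum_congr rfl fun j _ =>
              Finset.sum_congr rfl fun k _ => by ring
        _ = ∑ i, ∑ k, ∑ j, star (x i) * x j * τ (star (a k i) * a k j) :=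
            Finset.sum_congr rfl fun _ _ => Finset.sum_comm
        _ = ∑ k, ∑ i, ∑ j, star (x i) * x j * τ (star (a k i) * a k j) := Finset.sum_comm
        _ = ∑ k, τ (star (∑ i, x i • a k i) * (∑ j, x j • a k j)) := by
            simp only [expand]
    rw [key]
    exact Finset.sum_nonneg fun k _ => hpos _

end Aux

/-- If `u : G → U(A)` is a unitary representation into a unital C*-algebra with tracial
state `τ` and `φ : A → A` is completely positive, then `g ↦ τ(φ(u g) (u g)*)` is a
positive definite function on `G`. -/
theorem posDef_of_completelyPositive
    {G : Type*} [Group G]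
    {A : Type*} [NormedRing A] [StarRing A] [CStarRing A]
    [NormedAlgebra ℂ A] [StarModule ℂ A] [CompleteSpace A]
    (τ : A →ₗ[ℂ] ℂ)
    (hpos : ∀ x : A, 0 ≤ τ (star x * x))
    (hone : τ 1 = 1)
    (htrace : ∀ x y : A, τ (x * y) = τ (y * x))
    (u : G →* unitary A)
    (φ : A →ₗ[ℂ] A) (hφ : IsCompletelyPositive φ) :
    IsPosDefFn fun g : G => τ (φ ((u g : A)) * star ((u g : A))) := by
  intro n g
  set v : Fin n → A := fun k => (u (g k) : A) with hv
  have hcoe : ∀ i j, (u ((g i)⁻¹ * g j) : A) = star (v i) * v j := by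
    intro i j
    rw [_root_.map_mul, map_inv, ← Unitary.star_eq_inv]
    rfl
  obtain ⟨N', hN'⟩ := hφ n (Matrix.of fun i j => star (v i) * v j)
    ⟨Matrix.of fun k j => if (k : ℕ) = 0 then v j else 0, by
      ext i j
      simp only [of_apply, conjTranspose_apply, mul_apply, of_apply]
      rw [Finset.sum_eq_single (⟨0, i.pos⟩ : Fin n)]
      · simp
      · intro b _ hb
        have hb' : (b : ℕ) ≠ 0 := fun h => hb (Fin.ext h)
        simp [hb']
      · simp⟩
  have hφeq : ∀ i j, φ (star (v i) * v j) = ∑ k, star (N' k i) * N' k j := by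
    intro i j
    have h := congrFun (congrFun hN' i) j
    simpa [Matrix.map_apply, mul_apply] using h
  have key : ∀ i j, τ (φ ((u ((g i)⁻¹ * g j) : A)) * star ((u ((g i)⁻¹ * g j) : A)))
      = ∑ k, τ (star (N' k i * star (v i)) * (N' k j * star (v j))) := by
    intro i j
    rw [hcoe, hφeq, StarMul.star_mul, star_star, Finset.sum_mul, map_sum]
    refine Finset.sum_congr rfl fun k _ => ?_
    rw [StarMul.star_mul, star_star]
    rw [show star (N' k i) * N' k j * (star (v j) * v i)
        = (star (N' k i) * N' k j * star (v j)) * v i by noncomm_ring,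
      htrace _ (v i)]
    noncomm_ring
  have heq : (Matrix.of fun i j : Fin n =>
      (fun g : G => τ (φ ((u g : A)) * star ((u g : A)))) ((g i)⁻¹ * g j))
      = Matrix.of fun i j : Fin n =>
          ∑ k, τ (star ((fun k i => N' k i * star (v i)) k i)
            * ((fun k i => N' k i * star (v i)) k j)) := by
    ext i j
    exact key i j
  rw [heq]
  exact gram_posSemidef τ hpos _
end

section
/- Let H be a complex Hilbert space, T a bounded self-adjoint operator on H with 0 ≤ T ≤ 1, c ∈ [0,1), and p an orthogonal projection on H commuting with T such that T(1 − p) ≤ c·(1 − p) in the Loewner order. Then for every ξ ∈ H, (1 − c)·‖ξ − pξ‖ ≤ ‖Tξ − ξ‖. -/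
/-- If `T` is a self-adjoint operator with `0 ≤ T ≤ 1` on a Hilbert space, `p` is an
orthogonal projection commuting with `T`, and `T(1-p) ≤ c(1-p)` for some `0 ≤ c < 1`,
then `(1-c)‖ξ - pξ‖ ≤ ‖Tξ - ξ‖` for every vector `ξ`. -/
theorem dist_proj_le_of_spectral_gap
    {H : Type*} [NormedAddCommGroup H] [InnerProductSpace ℂ H] [CompleteSpace H]
    (T p : H →L[ℂ] H)
    (hT : IsSelfAdjoint T)
    (hT0 : ∀ ξ : H, 0 ≤ (inner ℂ (T ξ) ξ : ℂ).re)
    (hT1 : ∀ ξ : H, (inner ℂ (T ξ) ξ : ℂ).re ≤ (inner ℂ ξ ξ : ℂ).re)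
    (hp : IsSelfAdjoint p) (hidem : p ∘L p = p)
    (hcomm : T ∘L p = p ∘L T)
    (c : ℝ) (hc0 : 0 ≤ c) (hc1 : c < 1)
    (hgap : ∀ ξ : H, (inner ℂ (T (ξ - p ξ)) ξ : ℂ).re ≤ c * (inner ℂ (ξ - p ξ) ξ : ℂ).re) :
    ∀ ξ : H, (1 - c) * ‖ξ - p ξ‖ ≤ ‖T ξ - ξ‖ := by
  intro ξ
  set η := ξ - p ξ with hηdef
  have hpη : p η = 0 := by
    have := congrArg (fun f : H →L[ℂ] H => f ξ) hidem
    simp only [ContinuousLinearMap.comp_apply] at this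
    simp [hηdef, map_sub, this]
  have hadj : ∀ ζ : H, (inner ℂ (p ζ) η : ℂ) = 0 := by
    intro ζ
    rw [← hp.adjoint_eq, ContinuousLinearMap.adjoint_inner_left, hpη, inner_zero_right]
  have hξη : (inner ℂ ξ η : ℂ).re = ‖η‖ ^ 2 := by
    have : (inner ℂ ξ η : ℂ) = inner ℂ η η + inner ℂ (p ξ) η := by
      rw [← inner_add_left]
      congr 1
      simp [hηdef]
    rw [this, hadj ξ, add_zero, inner_self_eq_norm_sq_to_K]
    simp [← Complex.ofReal_pow]
  have hTξη : (inner ℂ (T ξ) η : ℂ).re = (inner ℂ (T η) η : ℂ).re := by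
    have h1 : T ξ = T η + p (T ξ) := by
      have := congrArg (fun f : H →L[ℂ] H => f ξ) hcomm
      simp only [ContinuousLinearMap.comp_apply] at this
      rw [hηdef, map_sub, this]
      abel
    rw [h1, inner_add_left, hadj (T ξ), add_zero]
  have hgapη : (inner ℂ (T η) η : ℂ).re ≤ c * ‖η‖ ^ 2 := by
    have := hgap η
    rw [hpη, sub_zero] at this
    calc (inner ℂ (T η) η : ℂ).re ≤ c * (inner ℂ η η : ℂ).re := this
      _ = c * ‖η‖ ^ 2 := by rw [inner_self_eq_norm_sq_to_K]; simp [← Complex.ofReal_pow]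
  have key : (1 - c) * ‖η‖ ^ 2 ≤ (inner ℂ (ξ - T ξ) η : ℂ).re := by
    rw [inner_sub_left]
    simp only [Complex.sub_re]
    rw [hξη, hTξη]
    nlinarith [hgapη]
  have cs : (inner ℂ (ξ - T ξ) η : ℂ).re ≤ ‖T ξ - ξ‖ * ‖η‖ := by
    calc (inner ℂ (ξ - T ξ) η : ℂ).re ≤ ‖(inner ℂ (ξ - T ξ) η : ℂ)‖ := by
          calc (inner ℂ (ξ - T ξ) η : ℂ).re ≤ |(inner ℂ (ξ - T ξ) η : ℂ).re| := le_abs_self _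
            _ ≤ ‖(inner ℂ (ξ - T ξ) η : ℂ)‖ := Complex.abs_re_le_norm _
            _ = ‖(inner ℂ (ξ - T ξ) η : ℂ)‖ := rfl
      _ ≤ ‖ξ - T ξ‖ * ‖η‖ := norm_inner_le_norm _ _
      _ = ‖T ξ - ξ‖ * ‖η‖ := by rw [norm_sub_rev]
  have h2 : (1 - c) * ‖η‖ ^ 2 ≤ ‖T ξ - ξ‖ * ‖η‖ := key.trans cs
  rcases eq_or_lt_of_le (norm_nonneg η) with h0 | h0
  · rw [← h0]; simp
  · nlinarith [h2, h0]
end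

section
/- Let G be a countably infinite group acting by measurable measure-preserving transformations on probability spaces (X, μ) and (Y, ν). Suppose the action on (X, μ) is mixing: for all measurable E, E' ⊆ X, the function g ↦ μ((g·E) ∩ E') tends to μ(E)·μ(E') along the cofinite filter on G; and suppose the action on (Y, ν) is ergodic: every measurable B ⊆ Y with ν((g·B) Δ B) = 0 for all g ∈ G has ν(B) ∈ {0, 1}. Then the diagonal action of G on (X × Y, μ ⊗ ν), g·(x,y) = (g·x, g·y), is ergodic. -/
open Filter MeasureTheory Set
open scoped symmDiff ENNReal

section AuxHelpers

variable {α : Type*}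

lemma smul_image_eq_preimage' {G : Type*} [Group G] [MulAction G α] (g : G) (s : Set α) :
    (fun a => g • a) '' s = (fun a => g⁻¹ • a) ⁻¹' s := by
  ext a
  constructor
  · rintro ⟨b, hb, rfl⟩
    simpa using hb
  · intro ha
    exact ⟨g⁻¹ • a, ha, by simp⟩

lemma subset_union_symmDiff (s t : Set α) : s ⊆ t ∪ s ∆ t := by
  intro x hx
  by_cases hxt : x ∈ t
  · exact Or.inl hxt
  · exact Or.inr (Set.mem_symmDiff.2 (Or.inl ⟨hx, hxt⟩))

lemma measure_le_add_symmDiff {_ : MeasurableSpace α} (μ : Measure α) (s t : Set α) :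
    μ s ≤ μ t + μ (s ∆ t) :=
  le_trans (measure_mono (subset_union_symmDiff s t)) (measure_union_le _ _)

lemma inter_symmDiff_inter_subset (s₁ s₂ t₁ t₂ : Set α) :
    (s₁ ∩ t₁) ∆ (s₂ ∩ t₂) ⊆ (s₁ ∆ s₂) ∪ (t₁ ∆ t₂) := by
  intro x hx
  simp only [Set.mem_symmDiff, Set.mem_union, Set.mem_inter_iff] at hx ⊢
  tauto

end AuxHelpers

/-- Normal form: a finite union of measurable rectangles whose second sides form a
measurable partition of `Y`. -/
def RectRep {X Y : Type*} [MeasurableSpace X] [MeasurableSpace Y] (s : Set (X × Y)) : Prop :=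
  ∃ (ι : Type) (_ : Fintype ι) (A : ι → Set X) (B : ι → Set Y),
    (∀ i, MeasurableSet (A i)) ∧ (∀ i, MeasurableSet (B i)) ∧
    Pairwise (Function.onFun Disjoint B) ∧ (⋃ i, B i) = Set.univ ∧
    s = ⋃ i, (A i) ×ˢ (B i)

lemma rectRep_of_generateSetAlgebra {X Y : Type*} [MeasurableSpace X] [MeasurableSpace Y]
    {s : Set (X × Y)}
    (hs : s ∈ MeasureTheory.generateSetAlgebra
      (Set.image2 (· ×ˢ ·) { s : Set X | MeasurableSet s } { t : Set Y | MeasurableSet t })) :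
    RectRep s := by
  induction hs with
  | base u hu =>
    obtain ⟨A, hA, B, hB, rfl⟩ := hu
    have hA' : MeasurableSet A := hA
    have hB' : MeasurableSet B := hB
    refine ⟨Bool, inferInstance, fun b => if b then A else ∅, fun b => if b then B else Bᶜ,
      ?_, ?_, ?_, ?_, ?_⟩
    · intro i; cases i <;> simp [hA']
    · intro i; cases i <;> simp [hB', hB'.compl]
    · intro i j hij
      cases i <;> cases j <;> simp only [Function.onFun, if_true, if_false, Bool.false_eq_true,
        Bool.true_eq_false]
      · exact absurd rfl hij
      · exact disjoint_compl_left
      · exact disjoint_compl_right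
      · exact absurd rfl hij
    · ext y; rcases Classical.em (y ∈ B) with h | h <;> simp [h]
    · ext ⟨x, y⟩
      constructor
      · intro h; exact Set.mem_iUnion.2 ⟨true, by simpa using h⟩
      · intro h
        rcases Set.mem_iUnion.1 h with ⟨b, hb⟩
        cases b <;> simp_all
  | empty =>
    exact ⟨PUnit, inferInstance, fun _ => ∅, fun _ => Set.univ, fun _ => .empty,
      fun _ => .univ, Subsingleton.pairwise, Set.iUnion_const _, by simp⟩
  | compl u _ ih =>
    obtain ⟨ι, hι, A, B, hA, hB, hdisj, hcov, rfl⟩ := ih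
    refine ⟨ι, hι, fun i => (A i)ᶜ, B, fun i => (hA i).compl, hB, hdisj, hcov, ?_⟩
    ext ⟨x, y⟩
    obtain ⟨i₀, hi₀⟩ := Set.mem_iUnion.1 (hcov ▸ Set.mem_univ y)
    simp only [Set.mem_compl_iff, Set.mem_iUnion, Set.mem_prod]
    constructor
    · intro h
      exact ⟨i₀, fun hx => h ⟨i₀, hx, hi₀⟩, hi₀⟩
    · rintro ⟨i, hx, hy⟩ ⟨j, hxj, hyj⟩
      have : i = j := by
        by_contra hij
        exact (hdisj hij).le_bot ⟨hy, hyj⟩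
      exact hx (this ▸ hxj)
  | union u v _ _ ihu ihv =>
    obtain ⟨ι, hι, A, B, hA, hB, hdisj, hcov, rfl⟩ := ihu
    obtain ⟨κ, hκ, C, D, hC, hD, hdisj', hcov', rfl⟩ := ihv
    refine ⟨ι × κ, @instFintypeProd _ _ hι hκ, fun p => A p.1 ∪ C p.2,
      fun p => B p.1 ∩ D p.2, fun p => (hA p.1).union (hC p.2),
      fun p => (hB p.1).inter (hD p.2), ?_, ?_, ?_⟩
    · rintro ⟨i, j⟩ ⟨i', j'⟩ hne
      by_cases hii : i = i'
      · subst hii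
        have hjj : j ≠ j' := fun h => hne (by rw [h])
        exact Disjoint.mono inf_le_right inf_le_right (hdisj' hjj)
      · exact Disjoint.mono inf_le_left inf_le_left (hdisj hii)
    · ext y
      simp only [Set.mem_iUnion, Set.mem_inter_iff, Prod.exists]
      constructor
      · intro _; trivial
      · intro _
        obtain ⟨i, hi⟩ := Set.mem_iUnion.1 (hcov ▸ Set.mem_univ y)
        obtain ⟨j, hj⟩ := Set.mem_iUnion.1 (hcov' ▸ Set.mem_univ y)
        exact ⟨i, j, hi, hj⟩
    · ext ⟨x, y⟩
      obtain ⟨i₀, hi₀⟩ := Set.mem_iUnion.1 (hcov ▸ Set.mem_univ y)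
      obtain ⟨j₀, hj₀⟩ := Set.mem_iUnion.1 (hcov' ▸ Set.mem_univ y)
      simp only [Set.mem_union, Set.mem_iUnion, Set.mem_prod, Prod.exists]
      constructor
      · rintro (⟨i, hx, hy⟩ | ⟨j, hx, hy⟩)
        · exact ⟨i, j₀, Or.inl hx, hy, hj₀⟩
        · exact ⟨i₀, j, Or.inr hx, hi₀, hy⟩
      · rintro ⟨i, j, hx | hx, hy1, hy2⟩
        · exact Or.inl ⟨i, hx, hy1⟩
        · exact Or.inr ⟨j, hx, hy2⟩

lemma exists_rectRep_approx {X Y : Type*} [MeasurableSpace X] [MeasurableSpace Y]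
    (μ : Measure X) (ν : Measure Y) [IsProbabilityMeasure μ] [IsProbabilityMeasure ν]
    {S : Set (X × Y)} (hS : MeasurableSet S) {ε : ℝ} (hε : 0 < ε) :
    ∃ R : Set (X × Y), RectRep R ∧ (μ.prod ν) (S ∆ R) < ENNReal.ofReal ε := by
  have hdense : (μ.prod ν).MeasureDense (MeasureTheory.generateSetAlgebra
      (Set.image2 (· ×ˢ ·) { s : Set X | MeasurableSet s } { t : Set Y | MeasurableSet t })) :=
    Measure.MeasureDense.of_generateFrom_isSetAlgebra_finite (μ.prod ν) isSetAlgebra_generateSetAlgebra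
      (generateFrom_generateSetAlgebra_eq.trans generateFrom_prod).symm
  obtain ⟨t, ht, hlt⟩ := hdense.approx S hS (measure_ne_top _ _) ε hε
  exact ⟨t, rectRep_of_generateSetAlgebra ht, hlt⟩

/-- A mixing measure-preserving action times an ergodic measure-preserving action of a
countably infinite group is ergodic (for the diagonal action on the product probability
space). -/
theorem mixing_times_ergodic_is_ergodic
    {G X Y : Type*} [Group G] [Countable G] [Infinite G]
    [MeasurableSpace X] [MeasurableSpace Y]
    (μ : Measure X) (ν : Measure Y) [IsProbabilityMeasure μ] [IsProbabilityMeasure ν]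
    [MulAction G X] [MulAction G Y]
    (hμ : ∀ g : G, MeasurePreserving (fun x : X => g • x) μ μ)
    (hν : ∀ g : G, MeasurePreserving (fun y : Y => g • y) ν ν)
    (hmix : ∀ E E' : Set X, MeasurableSet E → MeasurableSet E' →
      Tendsto (fun g : G => μ (((fun x => g • x) '' E) ∩ E')) cofinite
        (nhds (μ E * μ E')))
    (herg : ∀ B : Set Y, MeasurableSet B →
      (∀ g : G, ν (((fun y => g • y) '' B) ∆ B) = 0) → ν B = 0 ∨ ν B = 1) :
    ∀ S : Set (X × Y), MeasurableSet S →
      (∀ g : G, (μ.prod ν) (((fun q : X × Y => (g • q.1, g • q.2)) '' S) ∆ S) = 0) →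
      (μ.prod ν) S = 0 ∨ (μ.prod ν) S = 1 := by
  classical
  intro S hS hSinv
  set c := (μ.prod ν) S with hc_def
  have hcT : c ≠ ∞ := measure_ne_top _ _
  have hc1 : c ≤ 1 := prob_le_one
  -- the diagonal action is measure preserving
  have hτ : ∀ g : G, MeasurePreserving (fun q : X × Y => (g • q.1, g • q.2))
      (μ.prod ν) (μ.prod ν) := fun g => (hμ g).prod (hν g)
  have himg : ∀ (g : G) (T : Set (X × Y)), (fun q : X × Y => (g • q.1, g • q.2)) '' T
      = (fun q : X × Y => (g⁻¹ • q.1, g⁻¹ • q.2)) ⁻¹' T := by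
    intro g T
    ext q
    constructor
    · rintro ⟨p, hp, rfl⟩
      simpa using hp
    · intro hq
      exact ⟨(g⁻¹ • q.1, g⁻¹ • q.2), hq, by simp [Prod.ext_iff]⟩
  have hSinv' : ∀ g : G,
      (μ.prod ν) (((fun q : X × Y => (g⁻¹ • q.1, g⁻¹ • q.2)) ⁻¹' S) ∆ S) = 0 := by
    intro g
    rw [← himg g S]
    exact hSinv g
  -- the slice measure function
  set m : Y → ℝ≥0∞ := fun y => μ ((fun x => (x, y)) ⁻¹' S) with hm_def
  have hm_meas : Measurable m := measurable_measure_prodMk_right hS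
  have hint : ∫⁻ y, m y ∂ν = c := (Measure.prod_apply_symm hS).symm
  -- a.e. invariance of the slice measure
  have hminv : ∀ g : G, ∀ᵐ y ∂ν, m (g⁻¹ • y) = m y := by
    intro g
    have hpre : MeasurableSet ((fun q : X × Y => (g⁻¹ • q.1, g⁻¹ • q.2)) ⁻¹' S) :=
      (hτ g⁻¹).measurable hS
    have hNmeas : MeasurableSet ((((fun q : X × Y => (g⁻¹ • q.1, g⁻¹ • q.2)) ⁻¹' S)) ∆ S) :=
      hpre.symmDiff hS
    have h0 : ∫⁻ y, μ ((fun x => (x, y)) ⁻¹'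
        ((((fun q : X × Y => (g⁻¹ • q.1, g⁻¹ • q.2)) ⁻¹' S)) ∆ S)) ∂ν = 0 := by
      rw [← Measure.prod_apply_symm hNmeas]
      exact hSinv' g
    have h0' := (lintegral_eq_zero_iff (measurable_measure_prodMk_right hNmeas)).1 h0
    filter_upwards [h0'] with y hy
    have hslice : ((fun x => (x, y)) ⁻¹'
        ((((fun q : X × Y => (g⁻¹ • q.1, g⁻¹ • q.2)) ⁻¹' S)) ∆ S))
        = ((fun x : X => g⁻¹ • x) ⁻¹' ((fun x => (x, g⁻¹ • y)) ⁻¹' S))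
          ∆ ((fun x => (x, y)) ⁻¹' S) := by
      rw [Set.preimage_symmDiff]
      rfl
    rw [Pi.zero_apply, hslice] at hy
    have hmeas_slice : MeasurableSet ((fun x => (x, g⁻¹ • y)) ⁻¹' S) :=
      measurable_prodMk_right hS
    calc m (g⁻¹ • y) = μ ((fun x : X => g⁻¹ • x) ⁻¹' ((fun x => (x, g⁻¹ • y)) ⁻¹' S)) :=
          ((hμ g⁻¹).measure_preimage hmeas_slice.nullMeasurableSet).symm
    _ = μ ((fun x => (x, y)) ⁻¹' S) := measure_congr (measure_symmDiff_eq_zero_iff.mp hy)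
  -- level sets of m are invariant hence trivial
  have hE01 : ∀ r : ℝ≥0∞, ν {y | r < m y} = 0 ∨ ν {y | r < m y} = 1 := by
    intro r
    have hEmeas : MeasurableSet {y | r < m y} := measurableSet_lt measurable_const hm_meas
    refine herg _ hEmeas ?_
    intro g
    rw [smul_image_eq_preimage' g _]
    have hsub : ((fun y => g⁻¹ • y) ⁻¹' {y | r < m y}) ∆ {y | r < m y}
        ⊆ {y | ¬ m (g⁻¹ • y) = m y} := by
      intro y hy
      simp only [Set.mem_symmDiff, Set.mem_preimage, Set.mem_setOf_eq] at hy ⊢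
      intro heq
      rcases hy with ⟨h1, h2⟩ | ⟨h1, h2⟩
      · exact h2 (heq ▸ h1)
      · exact h2 (heq.symm ▸ h1)
    exact measure_mono_null hsub (by simpa [ae_iff] using hminv g)
  -- m is a.e. equal to c
  have hm_le : ∀ᵐ y ∂ν, m y ≤ c := by
    have hup : ∀ n : ℕ, ν {y | c + (n : ℝ≥0∞)⁻¹ < m y} = 0 := by
      intro n
      rcases hE01 (c + (n : ℝ≥0∞)⁻¹) with h | h
      · exact h
      · exfalso
        have h1 : (c + (n : ℝ≥0∞)⁻¹) * ν {y | c + (n : ℝ≥0∞)⁻¹ ≤ m y} ≤ ∫⁻ y, m y ∂ν :=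
          mul_meas_ge_le_lintegral hm_meas _
        have h2 : ν {y | c + (n : ℝ≥0∞)⁻¹ ≤ m y} = 1 := by
          refine le_antisymm prob_le_one ?_
          rw [← h]
          exact measure_mono fun y hy => le_of_lt (show c + (n : ℝ≥0∞)⁻¹ < m y from hy)
        rw [h2, mul_one, hint] at h1
        exact absurd h1 (not_le.mpr (ENNReal.lt_add_right hcT
          (ENNReal.inv_ne_zero.mpr (ENNReal.natCast_ne_top n))))
    have h0 : ∀ᵐ y ∂ν, ∀ n : ℕ, ¬ (c + (n : ℝ≥0∞)⁻¹ < m y) :=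
      ae_all_iff.2 fun n => measure_eq_zero_iff_ae_notMem.1 (hup n)
    filter_upwards [h0] with y hy
    by_contra hlt
    push_neg at hlt
    obtain ⟨n, hn⟩ := ENNReal.exists_inv_nat_lt (tsub_pos_iff_lt.2 hlt).ne'
    apply hy n
    calc c + (n : ℝ≥0∞)⁻¹ < c + (m y - c) := ENNReal.add_lt_add_left hcT hn
    _ = m y := add_tsub_cancel_of_le hlt.le
  have hm_ge : ∀ᵐ y ∂ν, c ≤ m y := by
    by_cases hc0 : c = 0
    · filter_upwards with y
      simp [hc0]
    · have hdn : ∀ n : ℕ, ν {y | c - (n : ℝ≥0∞)⁻¹ < m y} = 1 := by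
        intro n
        rcases hE01 (c - (n : ℝ≥0∞)⁻¹) with h | h
        · exfalso
          have hle : ∀ᵐ y ∂ν, m y ≤ c - (n : ℝ≥0∞)⁻¹ := by
            filter_upwards [measure_eq_zero_iff_ae_notMem.1 h] with y hy
            simpa using hy
          have hbad : ∫⁻ y, m y ∂ν ≤ c - (n : ℝ≥0∞)⁻¹ := by
            calc ∫⁻ y, m y ∂ν ≤ ∫⁻ _, (c - (n : ℝ≥0∞)⁻¹) ∂ν := lintegral_mono_ae hle
            _ = c - (n : ℝ≥0∞)⁻¹ := by rw [lintegral_const, measure_univ, mul_one]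
          rw [hint] at hbad
          exact absurd hbad (not_le.mpr (ENNReal.sub_lt_self hcT hc0
            (ENNReal.inv_ne_zero.mpr (ENNReal.natCast_ne_top n))))
        · exact h
      have h1 : ∀ᵐ y ∂ν, ∀ n : ℕ, c - (n : ℝ≥0∞)⁻¹ < m y := by
        refine ae_all_iff.2 fun n => ?_
        have hEmeas : MeasurableSet {y | c - (n : ℝ≥0∞)⁻¹ < m y} :=
          measurableSet_lt measurable_const hm_meas
        have hcompl : ν {y | c - (n : ℝ≥0∞)⁻¹ < m y}ᶜ = 0 := by
          rw [measure_compl hEmeas (measure_ne_top _ _), measure_univ, hdn n, tsub_self]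
        filter_upwards [measure_eq_zero_iff_ae_notMem.1 hcompl] with y hy
        simpa using hy
      filter_upwards [h1] with y hy
      by_contra hlt
      push_neg at hlt
      obtain ⟨n, hn⟩ := ENNReal.exists_inv_nat_lt (tsub_pos_iff_lt.2 hlt).ne'
      have h2 : m y + (n : ℝ≥0∞)⁻¹ < c := by
        calc m y + (n : ℝ≥0∞)⁻¹ < m y + (c - m y) :=
              ENNReal.add_lt_add_left (measure_ne_top _ _) hn
        _ = c := add_tsub_cancel_of_le hlt.le
      have hnT : ((n : ℝ≥0∞)⁻¹ : ℝ≥0∞) ≠ ∞ := ne_top_of_lt (lt_of_le_of_lt le_add_self h2)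
      exact absurd (hy n) (not_lt.mpr (ENNReal.le_sub_of_add_le_right hnT h2.le))
  have hm_const : ∀ᵐ y ∂ν, m y = c := by
    filter_upwards [hm_le, hm_ge] with y h1 h2
    exact le_antisymm h1 h2
  -- a.e. constancy composed with the action
  have hmg : ∀ g : G, ∀ᵐ y ∂ν, m (g⁻¹ • y) = c := by
    intro g
    have hN : ν {y | ¬ m y = c} = 0 := by
      have h := hm_const
      rwa [ae_iff] at h
    have hNmeas : MeasurableSet {y | ¬ m y = c} :=
      (hm_meas (measurableSet_singleton c)).compl
    have hpre0 : ν ((fun y => g⁻¹ • y) ⁻¹' {y | ¬ m y = c}) = 0 := by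
      rw [(hν g⁻¹).measure_preimage hNmeas.nullMeasurableSet]
      exact hN
    filter_upwards [measure_eq_zero_iff_ae_notMem.1 hpre0] with y hy
    simpa using hy
  -- the key quantitative estimate
  have hkey : ∀ e : ℝ≥0∞, e ≠ 0 → e ≠ ∞ → c ≤ c * c + 6 * e ∧ c * c ≤ c + 6 * e := by
    intro e he0 heT
    obtain ⟨R, hRrep, hSR⟩ : ∃ R : Set (X × Y), RectRep R ∧ (μ.prod ν) (S ∆ R) < e := by
      obtain ⟨R, hrep, hlt⟩ := exists_rectRep_approx μ ν hS (ENNReal.toReal_pos he0 heT)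
      rw [ENNReal.ofReal_toReal heT] at hlt
      exact ⟨R, hrep, hlt⟩
    obtain ⟨ι, hι, A, B, hA, hB, hBdisj, hBcov, rfl⟩ := hRrep
    haveI := hι
    set R : Set (X × Y) := ⋃ i, (A i) ×ˢ (B i) with hRdef
    have hAB : ∀ i, MeasurableSet ((A i) ×ˢ (B i)) := fun i => (hA i).prod (hB i)
    have hRmeas : MeasurableSet R := MeasurableSet.iUnion hAB
    have hDmeas : MeasurableSet (S ∆ R) := hS.symmDiff hRmeas
    set d : Y → ℝ≥0∞ := fun y => μ ((fun x => (x, y)) ⁻¹' (S ∆ R)) with hd_def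
    have hd_meas : Measurable d := measurable_measure_prodMk_right hDmeas
    have hd_int : ∫⁻ y, d y ∂ν ≤ e := by
      calc ∫⁻ y, d y ∂ν = (μ.prod ν) (S ∆ R) := (Measure.prod_apply_symm hDmeas).symm
      _ ≤ e := hSR.le
    set f : Y → ℝ≥0∞ := fun y => μ ((fun x => (x, y)) ⁻¹' R) with hf_def
    have hf_meas : Measurable f := measurable_measure_prodMk_right hRmeas
    have hslice_symm : ∀ y : Y, ((fun x => (x, y)) ⁻¹' (S ∆ R))
        = ((fun x => (x, y)) ⁻¹' S) ∆ ((fun x => (x, y)) ⁻¹' R) := fun y =>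
      Set.preimage_symmDiff _ _
    have hfm : ∀ y : Y, f y ≤ m y + d y := by
      intro y
      calc f y ≤ μ ((fun x => (x, y)) ⁻¹' S)
            + μ (((fun x => (x, y)) ⁻¹' R) ∆ ((fun x => (x, y)) ⁻¹' S)) :=
        measure_le_add_symmDiff μ _ _
      _ = m y + d y := by rw [symmDiff_comm, ← hslice_symm]
    have hmf : ∀ y : Y, m y ≤ f y + d y := by
      intro y
      calc m y ≤ μ ((fun x => (x, y)) ⁻¹' R)
            + μ (((fun x => (x, y)) ⁻¹' S) ∆ ((fun x => (x, y)) ⁻¹' R)) :=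
        measure_le_add_symmDiff μ _ _
      _ = f y + d y := by rw [← hslice_symm]
    have hf1 : ∀ y : Y, f y ≤ 1 := fun y => prob_le_one
    have hd1 : ∀ y : Y, d y ≤ 1 := fun y => prob_le_one
    -- formula for f as a finite sum of indicators
    have hf_eq : ∀ y : Y, f y = ∑ i : ι, (B i).indicator (fun _ => μ (A i)) y := by
      intro y
      have h1 : ((fun x => (x, y)) ⁻¹' R) = ⋃ i, (if y ∈ B i then A i else ∅) := by
        rw [hRdef, Set.preimage_iUnion]
        refine Set.iUnion_congr fun i => ?_
        exact Set.mk_preimage_prod_left_eq_if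
      have hdisj2 : Pairwise (Function.onFun Disjoint fun i => if y ∈ B i then A i else ∅) := by
        intro i j hij
        dsimp only [Function.onFun]
        by_cases hyi : y ∈ B i
        · by_cases hyj : y ∈ B j
          · exact absurd hyj (Set.disjoint_left.mp (hBdisj hij) hyi)
          · simp [hyj]
        · simp [hyi]
      have hmeas2 : ∀ i, MeasurableSet (if y ∈ B i then A i else ∅) := by
        intro i
        by_cases hyi : y ∈ B i <;> simp [hyi, hA i]
      show μ ((fun x => (x, y)) ⁻¹' R) = _
      rw [h1, measure_iUnion hdisj2 hmeas2, tsum_fintype]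
      refine Finset.sum_congr rfl fun i _ => ?_
      by_cases hyi : y ∈ B i <;> simp [Set.indicator_apply, hyi]
    -- the integral identity
    have hff : ∀ g : G, ∫⁻ y, f (g⁻¹ • y) * f y ∂ν
        = ∑ i : ι, ∑ j : ι, (μ (A i) * μ (A j)) * ν (((fun y => g⁻¹ • y) ⁻¹' B i) ∩ B j) := by
      intro g
      have hBmeas' : ∀ i : ι, MeasurableSet ((fun y : Y => g⁻¹ • y) ⁻¹' B i) :=
        fun i => (hν g⁻¹).measurable (hB i)
      have hterm : ∀ (i j : ι) (y : Y),
          (B i).indicator (fun _ => μ (A i)) (g⁻¹ • y) * (B j).indicator (fun _ => μ (A j)) y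
          = ((((fun y : Y => g⁻¹ • y) ⁻¹' B i) ∩ B j)).indicator
              (fun _ => μ (A i) * μ (A j)) y := by
        intro i j y
        by_cases h1 : g⁻¹ • y ∈ B i <;> by_cases h2 : y ∈ B j <;>
          simp [Set.indicator_apply, h1, h2]
      have hmeas_ind : ∀ (i j : ι), Measurable fun y : Y =>
          ((((fun y : Y => g⁻¹ • y) ⁻¹' B i) ∩ B j)).indicator
            (fun _ => μ (A i) * μ (A j)) y :=
        fun i j => measurable_const.indicator ((hBmeas' i).inter (hB j))
      calc ∫⁻ y, f (g⁻¹ • y) * f y ∂ν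
          = ∫⁻ y, ∑ i : ι, ∑ j : ι, ((((fun y : Y => g⁻¹ • y) ⁻¹' B i) ∩ B j)).indicator
              (fun _ => μ (A i) * μ (A j)) y ∂ν := by
            refine lintegral_congr fun y => ?_
            rw [hf_eq (g⁻¹ • y), hf_eq y, Finset.sum_mul_sum]
            exact Finset.sum_congr rfl fun i _ => Finset.sum_congr rfl fun j _ => hterm i j y
      _ = ∑ i : ι, ∑ j : ι, ∫⁻ y, ((((fun y : Y => g⁻¹ • y) ⁻¹' B i) ∩ B j)).indicator
              (fun _ => μ (A i) * μ (A j)) y ∂ν := by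
            rw [lintegral_finset_sum _ fun i _ => Finset.measurable_sum _ fun j _ => hmeas_ind i j]
            exact Finset.sum_congr rfl fun i _ =>
              lintegral_finset_sum _ fun j _ => hmeas_ind i j
      _ = ∑ i : ι, ∑ j : ι, (μ (A i) * μ (A j)) * ν (((fun y => g⁻¹ • y) ⁻¹' B i) ∩ B j) := by
            refine Finset.sum_congr rfl fun i _ => Finset.sum_congr rfl fun j _ => ?_
            rw [lintegral_indicator_const ((hBmeas' i).inter (hB j))]
    -- the total mass of the pieces is at most one
    have hsum1 : ∀ g : G, ∑ i : ι, ∑ j : ι, ν (((fun y => g⁻¹ • y) ⁻¹' B i) ∩ B j) ≤ 1 := by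
      intro g
      have hPmeas : ∀ i : ι, MeasurableSet ((fun y : Y => g⁻¹ • y) ⁻¹' B i) :=
        fun i => (hν g⁻¹).measurable (hB i)
      have hinner : ∀ i : ι, ∑ j : ι, ν (((fun y => g⁻¹ • y) ⁻¹' B i) ∩ B j)
          ≤ ν ((fun y : Y => g⁻¹ • y) ⁻¹' B i) := by
        intro i
        have hd2 : (↑(Finset.univ : Finset ι) : Set ι).PairwiseDisjoint
            (fun j => ((fun y : Y => g⁻¹ • y) ⁻¹' B i) ∩ B j) := by
          intro j _ j' _ hjj
          exact Disjoint.mono inf_le_right inf_le_right (hBdisj hjj)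
        rw [← measure_biUnion_finset hd2 fun j _ => (hPmeas i).inter (hB j)]
        exact measure_mono (Set.iUnion₂_subset fun j _ => Set.inter_subset_left)
      calc ∑ i : ι, ∑ j : ι, ν (((fun y => g⁻¹ • y) ⁻¹' B i) ∩ B j)
          ≤ ∑ i : ι, ν ((fun y : Y => g⁻¹ • y) ⁻¹' B i) :=
            Finset.sum_le_sum fun i _ => hinner i
      _ = ν (⋃ i ∈ (Finset.univ : Finset ι), (fun y : Y => g⁻¹ • y) ⁻¹' B i) := by
            rw [measure_biUnion_finset (fun i _ i' _ hii => (hBdisj hii).preimage _)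
              fun i _ => hPmeas i]
      _ ≤ 1 := prob_le_one
    -- the product measure identity
    have hprod : ∀ g : G,
        (μ.prod ν) (((fun q : X × Y => (g⁻¹ • q.1, g⁻¹ • q.2)) ⁻¹' R) ∩ R)
          = ∑ i : ι, ∑ j : ι, μ (((fun x => g⁻¹ • x) ⁻¹' A i) ∩ A j)
            * ν (((fun y => g⁻¹ • y) ⁻¹' B i) ∩ B j) := by
      intro g
      have hAmeas' : ∀ i : ι, MeasurableSet ((fun x : X => g⁻¹ • x) ⁻¹' A i) :=
        fun i => (hμ g⁻¹).measurable (hA i)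
      have hBmeas' : ∀ i : ι, MeasurableSet ((fun y : Y => g⁻¹ • y) ⁻¹' B i) :=
        fun i => (hν g⁻¹).measurable (hB i)
      have hset : ((fun q : X × Y => (g⁻¹ • q.1, g⁻¹ • q.2)) ⁻¹' R) ∩ R
          = ⋃ i : ι, ⋃ j : ι, ((((fun x : X => g⁻¹ • x) ⁻¹' A i) ∩ A j)
              ×ˢ ((((fun y : Y => g⁻¹ • y) ⁻¹' B i) ∩ B j))) := by
        rw [hRdef]
        ext ⟨x, y⟩
        simp only [Set.mem_inter_iff, Set.mem_iUnion, Set.mem_preimage, Set.mem_prod]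
        constructor
        · rintro ⟨⟨i, hi1, hi2⟩, ⟨j, hj1, hj2⟩⟩
          exact ⟨i, j, ⟨hi1, hj1⟩, hi2, hj2⟩
        · rintro ⟨i, j, ⟨hx1, hx2⟩, hy1, hy2⟩
          exact ⟨⟨i, hx1, hy1⟩, ⟨j, hx2, hy2⟩⟩
      have houter : Pairwise (Function.onFun Disjoint fun i : ι =>
          ⋃ j : ι, ((((fun x : X => g⁻¹ • x) ⁻¹' A i) ∩ A j)
            ×ˢ ((((fun y : Y => g⁻¹ • y) ⁻¹' B i) ∩ B j)))) := by
        intro i i' hii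
        rw [Function.onFun, Set.disjoint_left]
        rintro ⟨x, y⟩ hmem hmem'
        simp only [Set.mem_iUnion, Set.mem_prod, Set.mem_inter_iff, Set.mem_preimage] at hmem hmem'
        obtain ⟨j, ⟨hx1, hx2⟩, hy1, hy2⟩ := hmem
        obtain ⟨j', ⟨hx1', hx2'⟩, hy1', hy2'⟩ := hmem'
        exact Set.disjoint_left.mp (hBdisj hii) hy1 hy1'
      rw [hset, measure_iUnion houter fun i => MeasurableSet.iUnion fun j =>
        ((hAmeas' i).inter (hA j)).prod ((hBmeas' i).inter (hB j)), tsum_fintype]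
      refine Finset.sum_congr rfl fun i _ => ?_
      have hinnerdisj : Pairwise (Function.onFun Disjoint fun j : ι =>
          ((((fun x : X => g⁻¹ • x) ⁻¹' A i) ∩ A j)
            ×ˢ ((((fun y : Y => g⁻¹ • y) ⁻¹' B i) ∩ B j)))) := by
        intro j j' hjj
        rw [Function.onFun, Set.disjoint_left]
        rintro ⟨x, y⟩ hmem hmem'
        simp only [Set.mem_prod, Set.mem_inter_iff, Set.mem_preimage] at hmem hmem'
        exact Set.disjoint_left.mp (hBdisj hjj) hmem.2.2 hmem'.2.2
      rw [measure_iUnion hinnerdisj fun j =>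
        ((hAmeas' i).inter (hA j)).prod ((hBmeas' i).inter (hB j)), tsum_fintype]
      exact Finset.sum_congr rfl fun j _ => Measure.prod_prod _ _
    -- closeness of the invariant set and its approximation
    have hgS : ∀ g : G,
        (μ.prod ν) (((fun q : X × Y => (g⁻¹ • q.1, g⁻¹ • q.2)) ⁻¹' S) ∩ S) = c := by
      intro g
      have hae : ((fun q : X × Y => (g⁻¹ • q.1, g⁻¹ • q.2)) ⁻¹' S : Set (X × Y))
          =ᵐ[μ.prod ν] S := measure_symmDiff_eq_zero_iff.mp (hSinv' g)
      calc (μ.prod ν) (((fun q : X × Y => (g⁻¹ • q.1, g⁻¹ • q.2)) ⁻¹' S) ∩ S)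
          = (μ.prod ν) (S ∩ S) := measure_congr (hae.inter EventuallyEq.rfl)
      _ = c := by rw [Set.inter_self]
    have hRg : ∀ g : G,
        (μ.prod ν) ((((fun q : X × Y => (g⁻¹ • q.1, g⁻¹ • q.2)) ⁻¹' R) ∩ R)
          ∆ (((fun q : X × Y => (g⁻¹ • q.1, g⁻¹ • q.2)) ⁻¹' S) ∩ S)) ≤ 2 * e := by
      intro g
      have hsub := inter_symmDiff_inter_subset
        ((fun q : X × Y => (g⁻¹ • q.1, g⁻¹ • q.2)) ⁻¹' R)
        ((fun q : X × Y => (g⁻¹ • q.1, g⁻¹ • q.2)) ⁻¹' S) R S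
      have hpre_eq : ((fun q : X × Y => (g⁻¹ • q.1, g⁻¹ • q.2)) ⁻¹' R)
          ∆ ((fun q : X × Y => (g⁻¹ • q.1, g⁻¹ • q.2)) ⁻¹' S)
          = (fun q : X × Y => (g⁻¹ • q.1, g⁻¹ • q.2)) ⁻¹' (R ∆ S) :=
        (Set.preimage_symmDiff _ _).symm
      calc (μ.prod ν) ((((fun q : X × Y => (g⁻¹ • q.1, g⁻¹ • q.2)) ⁻¹' R) ∩ R)
          ∆ (((fun q : X × Y => (g⁻¹ • q.1, g⁻¹ • q.2)) ⁻¹' S) ∩ S))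
          ≤ (μ.prod ν) ((((fun q : X × Y => (g⁻¹ • q.1, g⁻¹ • q.2)) ⁻¹' R)
            ∆ ((fun q : X × Y => (g⁻¹ • q.1, g⁻¹ • q.2)) ⁻¹' S)) ∪ (R ∆ S)) :=
        measure_mono hsub
      _ = (μ.prod ν) (((fun q : X × Y => (g⁻¹ • q.1, g⁻¹ • q.2)) ⁻¹' (R ∆ S)) ∪ (R ∆ S)) := by
          rw [hpre_eq]
      _ ≤ (μ.prod ν) ((fun q : X × Y => (g⁻¹ • q.1, g⁻¹ • q.2)) ⁻¹' (R ∆ S))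
          + (μ.prod ν) (R ∆ S) := measure_union_le _ _
      _ = (μ.prod ν) (R ∆ S) + (μ.prod ν) (R ∆ S) := by
          rw [(hτ g⁻¹).measure_preimage (hRmeas.symmDiff hS).nullMeasurableSet]
      _ ≤ e + e := by
          rw [symmDiff_comm R S]
          exact add_le_add hSR.le hSR.le
      _ = 2 * e := (two_mul e).symm
    have hclose : ∀ g : G,
        c ≤ (μ.prod ν) (((fun q : X × Y => (g⁻¹ • q.1, g⁻¹ • q.2)) ⁻¹' R) ∩ R) + 2 * e ∧
        (μ.prod ν) (((fun q : X × Y => (g⁻¹ • q.1, g⁻¹ • q.2)) ⁻¹' R) ∩ R) ≤ c + 2 * e := by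
      intro g
      constructor
      · calc c = (μ.prod ν) (((fun q : X × Y => (g⁻¹ • q.1, g⁻¹ • q.2)) ⁻¹' S) ∩ S) :=
              (hgS g).symm
        _ ≤ (μ.prod ν) (((fun q : X × Y => (g⁻¹ • q.1, g⁻¹ • q.2)) ⁻¹' R) ∩ R)
            + (μ.prod ν) ((((fun q : X × Y => (g⁻¹ • q.1, g⁻¹ • q.2)) ⁻¹' S) ∩ S)
              ∆ (((fun q : X × Y => (g⁻¹ • q.1, g⁻¹ • q.2)) ⁻¹' R) ∩ R)) :=
            measure_le_add_symmDiff _ _ _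
        _ ≤ (μ.prod ν) (((fun q : X × Y => (g⁻¹ • q.1, g⁻¹ • q.2)) ⁻¹' R) ∩ R) + 2 * e :=
            add_le_add_right (by rw [symmDiff_comm]; exact hRg g) _
      · calc (μ.prod ν) (((fun q : X × Y => (g⁻¹ • q.1, g⁻¹ • q.2)) ⁻¹' R) ∩ R)
            ≤ (μ.prod ν) (((fun q : X × Y => (g⁻¹ • q.1, g⁻¹ • q.2)) ⁻¹' S) ∩ S)
            + (μ.prod ν) ((((fun q : X × Y => (g⁻¹ • q.1, g⁻¹ • q.2)) ⁻¹' R) ∩ R)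
              ∆ (((fun q : X × Y => (g⁻¹ • q.1, g⁻¹ • q.2)) ⁻¹' S) ∩ S)) :=
            measure_le_add_symmDiff _ _ _
        _ ≤ c + 2 * e := add_le_add (hgS g).le (hRg g)
    -- the mixing estimate, eventually in g
    have hmix' : ∀ᶠ g : G in cofinite, ∀ i j : ι,
        μ (((fun x => g⁻¹ • x) ⁻¹' A i) ∩ A j) ≤ μ (A i) * μ (A j) + e ∧
        μ (A i) * μ (A j) ≤ μ (((fun x => g⁻¹ • x) ⁻¹' A i) ∩ A j) + e := by
      rw [eventually_all]
      intro i
      rw [eventually_all]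
      intro j
      have hne : μ (A i) * μ (A j) ≠ ∞ :=
        ENNReal.mul_ne_top (measure_ne_top _ _) (measure_ne_top _ _)
      have hIcc : Set.Icc (μ (A i) * μ (A j) - e) (μ (A i) * μ (A j) + e)
          ∈ nhds (μ (A i) * μ (A j)) := ENNReal.Icc_mem_nhds hne he0
      filter_upwards [(hmix (A i) (A j) (hA i) (hA j)).eventually_mem hIcc] with g hg
      rw [smul_image_eq_preimage' g (A i)] at hg
      exact ⟨hg.2, tsub_le_iff_right.mp hg.1⟩
    -- comparison of the integral with c * c
    have hup2 : ∀ g : G, ∫⁻ y, f (g⁻¹ • y) * f y ∂ν ≤ c * c + 3 * e := by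
      intro g
      have hae : ∀ᵐ y ∂ν, f (g⁻¹ • y) * f y ≤ c * c + (d y + 2 * d (g⁻¹ • y)) := by
        filter_upwards [hm_const, hmg g] with y h1 h2
        have e1 : f (g⁻¹ • y) ≤ c + d (g⁻¹ • y) := h2 ▸ hfm (g⁻¹ • y)
        have e2 : f y ≤ c + d y := h1 ▸ hfm y
        calc f (g⁻¹ • y) * f y ≤ (c + d (g⁻¹ • y)) * (c + d y) := mul_le_mul' e1 e2
        _ = c * c + (c * d y + (d (g⁻¹ • y) * c + d (g⁻¹ • y) * d y)) := by ring
        _ ≤ c * c + (1 * d y + (d (g⁻¹ • y) * 1 + d (g⁻¹ • y) * 1)) :=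
            add_le_add_right (add_le_add (mul_le_mul_left hc1 _)
              (add_le_add (mul_le_mul_right hc1 _) (mul_le_mul_right (hd1 y) _))) _
        _ = c * c + (d y + 2 * d (g⁻¹ • y)) := by ring
      have hcomp : ∫⁻ y, d (g⁻¹ • y) ∂ν = ∫⁻ y, d y ∂ν := (hν g⁻¹).lintegral_comp hd_meas
      calc ∫⁻ y, f (g⁻¹ • y) * f y ∂ν
          ≤ ∫⁻ y, (c * c + (d y + 2 * d (g⁻¹ • y))) ∂ν := lintegral_mono_ae hae
      _ = c * c + (∫⁻ y, d y ∂ν + 2 * ∫⁻ y, d (g⁻¹ • y) ∂ν) := by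
          rw [lintegral_add_left measurable_const, lintegral_const, measure_univ, mul_one,
            lintegral_add_left hd_meas, lintegral_const_mul 2 (show Measurable fun y : Y => d (g⁻¹ • y) from hd_meas.comp (hν g⁻¹).measurable)]
      _ = c * c + (∫⁻ y, d y ∂ν + 2 * ∫⁻ y, d y ∂ν) := by rw [hcomp]
      _ ≤ c * c + (e + 2 * e) :=
          add_le_add_right (add_le_add hd_int (mul_le_mul_right hd_int 2)) _
      _ = c * c + 3 * e := by ring
    have hlow2 : ∀ g : G, c * c ≤ ∫⁻ y, f (g⁻¹ • y) * f y ∂ν + 3 * e := by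
      intro g
      have hae : ∀ᵐ y ∂ν, c * c ≤ f (g⁻¹ • y) * f y + (d y + 2 * d (g⁻¹ • y)) := by
        filter_upwards [hm_const, hmg g] with y h1 h2
        have e1 : c ≤ f (g⁻¹ • y) + d (g⁻¹ • y) := h2 ▸ hmf (g⁻¹ • y)
        have e2 : c ≤ f y + d y := h1 ▸ hmf y
        calc c * c ≤ (f (g⁻¹ • y) + d (g⁻¹ • y)) * (f y + d y) := mul_le_mul' e1 e2
        _ = f (g⁻¹ • y) * f y
            + (f (g⁻¹ • y) * d y + (d (g⁻¹ • y) * f y + d (g⁻¹ • y) * d y)) := by ring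
        _ ≤ f (g⁻¹ • y) * f y + (1 * d y + (d (g⁻¹ • y) * 1 + d (g⁻¹ • y) * 1)) :=
            add_le_add_right (add_le_add (mul_le_mul_left (hf1 _) _)
              (add_le_add (mul_le_mul_right (hf1 _) _) (mul_le_mul_right (hd1 _) _))) _
        _ = f (g⁻¹ • y) * f y + (d y + 2 * d (g⁻¹ • y)) := by ring
      have hcomp : ∫⁻ y, d (g⁻¹ • y) ∂ν = ∫⁻ y, d y ∂ν := (hν g⁻¹).lintegral_comp hd_meas
      calc c * c = ∫⁻ _, c * c ∂ν := by rw [lintegral_const, measure_univ, mul_one]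
      _ ≤ ∫⁻ y, (f (g⁻¹ • y) * f y + (d y + 2 * d (g⁻¹ • y))) ∂ν := lintegral_mono_ae hae
      _ = ∫⁻ y, f (g⁻¹ • y) * f y ∂ν + (∫⁻ y, d y ∂ν + 2 * ∫⁻ y, d (g⁻¹ • y) ∂ν) := by
          rw [lintegral_add_left (show Measurable fun y : Y => f (g⁻¹ • y) * f y from (hf_meas.comp (hν g⁻¹).measurable).mul hf_meas),
            lintegral_add_left hd_meas, lintegral_const_mul 2 (show Measurable fun y : Y => d (g⁻¹ • y) from hd_meas.comp (hν g⁻¹).measurable)]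
      _ = ∫⁻ y, f (g⁻¹ • y) * f y ∂ν + (∫⁻ y, d y ∂ν + 2 * ∫⁻ y, d y ∂ν) := by rw [hcomp]
      _ ≤ ∫⁻ y, f (g⁻¹ • y) * f y ∂ν + (e + 2 * e) :=
          add_le_add_right (add_le_add hd_int (mul_le_mul_right hd_int 2)) _
      _ = ∫⁻ y, f (g⁻¹ • y) * f y ∂ν + 3 * e := by ring
    -- pick a good group element and combine all estimates
    obtain ⟨g, hg⟩ := hmix'.exists
    constructor
    · calc c ≤ (μ.prod ν) (((fun q : X × Y => (g⁻¹ • q.1, g⁻¹ • q.2)) ⁻¹' R) ∩ R) + 2 * e :=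
          (hclose g).1
      _ = (∑ i : ι, ∑ j : ι, μ (((fun x => g⁻¹ • x) ⁻¹' A i) ∩ A j)
            * ν (((fun y => g⁻¹ • y) ⁻¹' B i) ∩ B j)) + 2 * e := by rw [hprod g]
      _ ≤ (∑ i : ι, ∑ j : ι, (μ (A i) * μ (A j) + e)
            * ν (((fun y => g⁻¹ • y) ⁻¹' B i) ∩ B j)) + 2 * e := by
          refine add_le_add_left
            (Finset.sum_le_sum fun i _ => Finset.sum_le_sum fun j _ => ?_) _
          exact mul_le_mul_left (hg i j).1 _
      _ = ((∑ i : ι, ∑ j : ι, (μ (A i) * μ (A j))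
            * ν (((fun y => g⁻¹ • y) ⁻¹' B i) ∩ B j))
           + e * ∑ i : ι, ∑ j : ι, ν (((fun y => g⁻¹ • y) ⁻¹' B i) ∩ B j)) + 2 * e := by
          simp_rw [add_mul, Finset.sum_add_distrib, Finset.mul_sum]
      _ = ((∫⁻ y, f (g⁻¹ • y) * f y ∂ν)
           + e * ∑ i : ι, ∑ j : ι, ν (((fun y => g⁻¹ • y) ⁻¹' B i) ∩ B j)) + 2 * e := by
          rw [hff g]
      _ ≤ ((∫⁻ y, f (g⁻¹ • y) * f y ∂ν) + e * 1) + 2 * e :=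
          add_le_add_left (add_le_add_right (mul_le_mul_right (hsum1 g) e) _) _
      _ = (∫⁻ y, f (g⁻¹ • y) * f y ∂ν) + 3 * e := by ring
      _ ≤ (c * c + 3 * e) + 3 * e := add_le_add_left (hup2 g) _
      _ = c * c + 6 * e := by ring
    · calc c * c ≤ ∫⁻ y, f (g⁻¹ • y) * f y ∂ν + 3 * e := hlow2 g
      _ = (∑ i : ι, ∑ j : ι, (μ (A i) * μ (A j))
            * ν (((fun y => g⁻¹ • y) ⁻¹' B i) ∩ B j)) + 3 * e := by rw [hff g]
      _ ≤ (∑ i : ι, ∑ j : ι, (μ (((fun x => g⁻¹ • x) ⁻¹' A i) ∩ A j) + e)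
            * ν (((fun y => g⁻¹ • y) ⁻¹' B i) ∩ B j)) + 3 * e := by
          refine add_le_add_left
            (Finset.sum_le_sum fun i _ => Finset.sum_le_sum fun j _ => ?_) _
          exact mul_le_mul_left (hg i j).2 _
      _ = ((∑ i : ι, ∑ j : ι, μ (((fun x => g⁻¹ • x) ⁻¹' A i) ∩ A j)
            * ν (((fun y => g⁻¹ • y) ⁻¹' B i) ∩ B j))
           + e * ∑ i : ι, ∑ j : ι, ν (((fun y => g⁻¹ • y) ⁻¹' B i) ∩ B j)) + 3 * e := by
          simp_rw [add_mul, Finset.sum_add_distrib, Finset.mul_sum]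
      _ ≤ ((∑ i : ι, ∑ j : ι, μ (((fun x => g⁻¹ • x) ⁻¹' A i) ∩ A j)
            * ν (((fun y => g⁻¹ • y) ⁻¹' B i) ∩ B j)) + e * 1) + 3 * e :=
          add_le_add_left (add_le_add_right (mul_le_mul_right (hsum1 g) e) _) _
      _ = (μ.prod ν) (((fun q : X × Y => (g⁻¹ • q.1, g⁻¹ • q.2)) ⁻¹' R) ∩ R) + 4 * e := by
          rw [← hprod g]; ring
      _ ≤ (c + 2 * e) + 4 * e := add_le_add_left (hclose g).2 _
      _ = c + 6 * e := by ring
  -- conclude that c * c = c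
  have hcc : c * c = c := by
    refine le_antisymm ?_ ?_
    · refine ENNReal.le_of_forall_pos_le_add fun δ hδ _ => ?_
      have hδ0 : ((δ : ℝ≥0∞) / 6) ≠ 0 := by
        rw [Ne, ENNReal.div_eq_zero_iff]
        push_neg
        exact ⟨ENNReal.coe_ne_zero.mpr hδ.ne', by norm_num⟩
      have hδT : ((δ : ℝ≥0∞) / 6) ≠ ∞ :=
        (ENNReal.div_lt_top ENNReal.coe_ne_top (by norm_num)).ne
      calc c * c ≤ c + 6 * ((δ : ℝ≥0∞) / 6) := (hkey ((δ : ℝ≥0∞) / 6) hδ0 hδT).2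
      _ = c + δ := by rw [ENNReal.mul_div_cancel' (by norm_num) (by norm_num)]
    · refine ENNReal.le_of_forall_pos_le_add fun δ hδ _ => ?_
      have hδ0 : ((δ : ℝ≥0∞) / 6) ≠ 0 := by
        rw [Ne, ENNReal.div_eq_zero_iff]
        push_neg
        exact ⟨ENNReal.coe_ne_zero.mpr hδ.ne', by norm_num⟩
      have hδT : ((δ : ℝ≥0∞) / 6) ≠ ∞ :=
        (ENNReal.div_lt_top ENNReal.coe_ne_top (by norm_num)).ne
      calc c ≤ c * c + 6 * ((δ : ℝ≥0∞) / 6) := (hkey ((δ : ℝ≥0∞) / 6) hδ0 hδT).1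
      _ = c * c + δ := by rw [ENNReal.mul_div_cancel' (by norm_num) (by norm_num)]
  by_cases hc0 : c = 0
  · exact Or.inl hc0
  · exact Or.inr ((ENNReal.mul_eq_left hc0 hcT).1 hcc)
end

section
/- Let F₂ be the free group on two generators and, for g ∈ F₂, let ℓ(g) denote the length of the reduced word representing g. Then for every t > 0 the function g ↦ exp(−t·ℓ(g)) is positive definite on F₂. (Haagerup's theorem.) -/
open scoped ComplexOrder

namespace HaagerupAux

open FreeGroup List

variable {α : Type*} [DecidableEq α]
set_option linter.unusedSectionVars false

/-- A word is reduced: no adjacent cancelling pair. -/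
def Rd (L : List (α × Bool)) : Prop :=
  List.Chain' (fun a b => ¬(a.1 = b.1 ∧ a.2 = !b.2)) L

lemma rd_nil : Rd ([] : List (α × Bool)) := List.isChain_nil

lemma reduce_eq_self_of_rd : ∀ {L : List (α × Bool)}, Rd L → FreeGroup.reduce L = L := by
  intro L
  induction L with
  | nil => intro _; rfl
  | cons x L ih =>
    intro h
    rw [FreeGroup.reduce.cons, ih h.tail]
    cases L with
    | nil => rfl
    | cons hd tl =>
      simp only
      rw [if_neg (List.isChain_cons_cons.mp h).1]

lemma rd_reduce (L : List (α × Bool)) : Rd (FreeGroup.reduce L) := by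
  induction L with
  | nil => exact rd_nil
  | cons x L ih =>
    rw [FreeGroup.reduce.cons]
    rcases hL : FreeGroup.reduce L with _ | ⟨hd, tl⟩
    · exact List.isChain_singleton _
    · rw [hL] at ih
      simp only
      split_ifs with hc
      · exact ih.tail
      · exact List.isChain_cons_cons.mpr ⟨hc, ih⟩

lemma rd_toWord (g : FreeGroup α) : Rd g.toWord := by
  rw [← FreeGroup.reduce_toWord]; exact rd_reduce _

lemma rd_of_prefix {L L' : List (α × Bool)} (h : Rd L) (h' : L' <+: L) : Rd L' :=
  List.IsChain.prefix h h'

lemma invRev_cons (a : α × Bool) (L : List (α × Bool)) :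
    FreeGroup.invRev (a :: L) = FreeGroup.invRev L ++ [(a.1, !a.2)] := by
  simp [FreeGroup.invRev]

lemma rd_invRev {L : List (α × Bool)} (h : Rd L) : Rd (FreeGroup.invRev L) := by
  unfold FreeGroup.invRev
  unfold Rd List.Chain'
  rw [List.isChain_reverse, List.isChain_map]
  refine h.imp ?_
  rintro ⟨a, b⟩ ⟨c, d⟩ hr ⟨h1, h2⟩
  exact hr ⟨h1.symm, by revert h2; cases b <;> cases d <;> simp⟩

/-- Longest common prefix. -/
def lcp : List (α × Bool) → List (α × Bool) → List (α × Bool)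
  | a :: u, b :: v => if a = b then a :: lcp u v else []
  | _, _ => []

@[simp] lemma lcp_nil_left (v : List (α × Bool)) : lcp [] v = [] := by cases v <;> rfl
@[simp] lemma lcp_nil_right (u : List (α × Bool)) : lcp u [] = [] := by cases u <;> rfl
lemma lcp_cons (a b : α × Bool) (u v : List (α × Bool)) :
    lcp (a :: u) (b :: v) = if a = b then a :: lcp u v else [] := rfl

lemma lcp_prefix_left : ∀ u v : List (α × Bool), lcp u v <+: u
  | [], v => by simp
  | a :: u, [] => by simp
  | a :: u, b :: v => by
    rw [lcp_cons]
    split_ifs with h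
    · subst h; exact List.cons_prefix_cons.mpr ⟨rfl, lcp_prefix_left u v⟩
    · exact List.nil_prefix

lemma lcp_prefix_right : ∀ u v : List (α × Bool), lcp u v <+: v
  | [], v => by simp
  | a :: u, [] => by simp
  | a :: u, b :: v => by
    rw [lcp_cons]
    split_ifs with h
    · subst h; exact List.cons_prefix_cons.mpr ⟨rfl, lcp_prefix_right u v⟩
    · exact List.nil_prefix

lemma prefix_lcp : ∀ {w u v : List (α × Bool)}, w <+: u → w <+: v → w <+: lcp u v := by
  intro w
  induction w with
  | nil => intro u v _ _; exact List.nil_prefix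
  | cons c w ih =>
    rintro (_ | ⟨a, u⟩) (_ | ⟨b, v⟩) hu hv
    · exact absurd hu (by simp)
    · exact absurd hu (by simp)
    · exact absurd hv (by simp)
    · obtain ⟨rfl, hu'⟩ := List.cons_prefix_cons.mp hu
      obtain ⟨rfl, hv'⟩ := List.cons_prefix_cons.mp hv
      rw [lcp_cons, if_pos rfl]
      exact List.cons_prefix_cons.mpr ⟨rfl, ih hu' hv'⟩


lemma reduce_length : ∀ u v : List (α × Bool), Rd u → Rd v →
    (FreeGroup.reduce (FreeGroup.invRev u ++ v)).length
      = (u.length - (lcp u v).length) + (v.length - (lcp u v).length)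
  | [], v => by
    intro _ hv
    simp [FreeGroup.invRev, reduce_eq_self_of_rd hv]
  | a :: u, [] => by
    intro hu _
    rw [List.append_nil, reduce_eq_self_of_rd (rd_invRev hu)]
    simp [FreeGroup.invRev_length]
  | a :: u, b :: v => by
    intro hu hv
    by_cases hab : a = b
    · subst hab
      have hstep : FreeGroup.reduce (FreeGroup.invRev (a :: u) ++ a :: v)
          = FreeGroup.reduce (FreeGroup.invRev u ++ v) := by
        have : FreeGroup.invRev (a :: u) ++ a :: v
            = FreeGroup.invRev u ++ ((a.1, !a.2) :: (a.1, !(!a.2)) :: v) := by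
          rw [invRev_cons, List.append_assoc]
          simp [Bool.not_not]
        rw [this]
        exact FreeGroup.reduce.Step.eq (FreeGroup.Red.Step.not)
      rw [hstep, reduce_length u v hu.tail hv.tail, lcp_cons, if_pos rfl]
      have h1 : (lcp u v).length ≤ u.length := (lcp_prefix_left u v).length_le
      have h2 : (lcp u v).length ≤ v.length := (lcp_prefix_right u v).length_le
      simp only [List.length_cons]
      omega
    · rw [lcp_cons, if_neg hab]
      have hrd : Rd (FreeGroup.invRev (a :: u) ++ b :: v) := by
        rw [invRev_cons, List.append_assoc]
        refine List.IsChain.append (rd_invRev hu.tail) ?_ ?_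
        · refine List.isChain_cons_cons.mpr ⟨?_, hv⟩
          rintro ⟨h1, h2⟩
          exact hab (Prod.ext h1 (by revert h2; cases a.2 <;> cases b.2 <;> simp))
        · intro x hx y hy
          -- x is last of invRev u = (inverse of first of u), y = (a.1, !a.2)
          rintro ⟨e1, e2⟩
          -- x.1 = y.1 and x.2 = !y.2 ; x comes from invRev u's last, which is inverse of u's head
          -- derive contradiction with hu : Rd (a :: u)
          rcases u with _ | ⟨c, u'⟩
          · simp [FreeGroup.invRev] at hx
          · have hx' : x = (c.1, !c.2) := by
              rw [invRev_cons, List.getLast?_concat] at hx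
              simpa using hx.symm
            have hy' : y = (a.1, !a.2) := by simpa using hy.symm
            subst hx'; subst hy'
            simp only at e1 e2
            have : ¬(a.1 = c.1 ∧ a.2 = !c.2) := (List.isChain_cons_cons.mp hu).1
            exact this ⟨by rw [e1], by revert e2; cases a.2 <;> cases c.2 <;> simp⟩
      rw [reduce_eq_self_of_rd hrd]
      simp [FreeGroup.invRev_length]

lemma norm_inv_mul (g h : FreeGroup α) :
    FreeGroup.norm (g⁻¹ * h)
      = (g.toWord.length - (lcp g.toWord h.toWord).length)
        + (h.toWord.length - (lcp g.toWord h.toWord).length) := by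
  conv_lhs => rw [← FreeGroup.mk_toWord (x := g), ← FreeGroup.mk_toWord (x := h)]
  rw [FreeGroup.inv_mk, FreeGroup.mul_mk]
  show (FreeGroup.mk _).toWord.length = _
  rw [FreeGroup.toWord_mk]
  exact reduce_length _ _ (rd_toWord g) (rd_toWord h)

/-- Haagerup's vector: value of `ξ_g` at a potential prefix `w`. -/
noncomputable def xi (r : ℝ) (g w : FreeGroup α) : ℝ :=
  if w.toWord <+: g.toWord then
    (if w.toWord.length = 0 then r ^ g.norm
     else Real.sqrt (1 - r ^ 2) * r ^ (g.norm - w.toWord.length))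
  else 0

/-- The finset of prefixes of `g`. -/
noncomputable def prefs (g : FreeGroup α) : Finset (FreeGroup α) :=
  (Finset.range (g.norm + 1)).image fun k => FreeGroup.mk (g.toWord.take k)

lemma toWord_mk_prefix {g : FreeGroup α} {L : List (α × Bool)} (h : L <+: g.toWord) :
    (FreeGroup.mk L).toWord = L := by
  rw [FreeGroup.toWord_mk, reduce_eq_self_of_rd (rd_of_prefix (rd_toWord g) h)]

lemma mem_prefs {w g : FreeGroup α} (h : w.toWord <+: g.toWord) : w ∈ prefs g := by
  refine Finset.mem_image.mpr ⟨w.toWord.length, ?_, ?_⟩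
  · exact Finset.mem_range.mpr (Nat.lt_succ_of_le h.length_le)
  · rw [← List.prefix_iff_eq_take.mp h, FreeGroup.mk_toWord]

lemma geom_sum (r : ℝ) (hr0 : 0 < r) (hr1 : r ≤ 1) :
    ∀ (m a b : ℕ), m ≤ a → m ≤ b →
      (∑ k ∈ Finset.range (m + 1),
        (if k = 0 then r ^ a else Real.sqrt (1 - r ^ 2) * r ^ (a - k)) *
        (if k = 0 then r ^ b else Real.sqrt (1 - r ^ 2) * r ^ (b - k)))
      = r ^ (a + b - 2 * m) := by
  have hsq : Real.sqrt (1 - r ^ 2) * Real.sqrt (1 - r ^ 2) = 1 - r ^ 2 :=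
    Real.mul_self_sqrt (by nlinarith)
  intro m
  induction m with
  | zero => intro a b _ _; simp [pow_add]
  | succ m ih =>
    intro a b ha hb
    rw [Finset.sum_range_succ, ih a b (by omega) (by omega)]
    rw [if_neg (Nat.succ_ne_zero m), if_neg (Nat.succ_ne_zero m)]
    have e1 : r ^ (a - (m + 1)) * r ^ (b - (m + 1)) = r ^ (a + b - 2 * (m + 1)) := by
      rw [← pow_add]; congr 1; omega
    have e2 : a + b - 2 * m = (a + b - 2 * (m + 1)) + 2 := by omega
    have e3 : Real.sqrt (1 - r ^ 2) * r ^ (a - (m + 1))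
        * (Real.sqrt (1 - r ^ 2) * r ^ (b - (m + 1)))
        = (1 - r ^ 2) * r ^ (a + b - 2 * (m + 1)) := by
      rw [mul_mul_mul_comm, hsq, e1]
    rw [e3, e2, pow_add]; ring

lemma gram (r : ℝ) (hr0 : 0 < r) (hr1 : r ≤ 1) (g h : FreeGroup α)
    (S : Finset (FreeGroup α)) (hS : prefs g ⊆ S) :
    ∑ w ∈ S, xi r g w * xi r h w = r ^ FreeGroup.norm (g⁻¹ * h) := by
  classical
  have hpu : lcp g.toWord h.toWord <+: g.toWord := lcp_prefix_left _ _
  have hpv : lcp g.toWord h.toWord <+: h.toWord := lcp_prefix_right _ _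
  have hma : (lcp g.toWord h.toWord).length ≤ g.norm := hpu.length_le
  have hmb : (lcp g.toWord h.toWord).length ≤ h.norm := hpv.length_le
  have hsub : ∀ k, (FreeGroup.mk ((lcp g.toWord h.toWord).take k)).toWord
      = (lcp g.toWord h.toWord).take k := fun k =>
    toWord_mk_prefix (((lcp g.toWord h.toWord).take_prefix k).trans hpu)
  have hTS : (Finset.range ((lcp g.toWord h.toWord).length + 1)).image
      (fun k => FreeGroup.mk ((lcp g.toWord h.toWord).take k)) ⊆ S := by
    intro w hw
    obtain ⟨k, _, rfl⟩ := Finset.mem_image.mp hw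
    exact hS (mem_prefs (by
      rw [hsub k]
      exact ((lcp g.toWord h.toWord).take_prefix k).trans hpu))
  rw [← Finset.sum_subset hTS ?vanish]
  case vanish =>
    intro w _ hwT
    by_cases h1 : w.toWord <+: g.toWord
    · by_cases h2 : w.toWord <+: h.toWord
      · exfalso
        apply hwT
        have hwp : w.toWord <+: lcp g.toWord h.toWord := prefix_lcp h1 h2
        refine Finset.mem_image.mpr ⟨w.toWord.length, ?_, ?_⟩
        · exact Finset.mem_range.mpr (Nat.lt_succ_of_le hwp.length_le)
        · rw [← List.prefix_iff_eq_take.mp hwp, FreeGroup.mk_toWord]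
      · simp only [xi]; rw [if_neg h2, mul_zero]
    · simp only [xi]; rw [if_neg h1, zero_mul]
  rw [Finset.sum_image ?inj]
  case inj =>
    intro k₁ hk₁ k₂ hk₂ hkeq
    have h₁ : k₁ ≤ (lcp g.toWord h.toWord).length :=
      Nat.lt_succ_iff.mp (Finset.mem_range.mp hk₁)
    have h₂ : k₂ ≤ (lcp g.toWord h.toWord).length :=
      Nat.lt_succ_iff.mp (Finset.mem_range.mp hk₂)
    have hlen := congrArg (fun x : FreeGroup α => x.toWord.length) hkeq
    simp only [hsub, List.length_take] at hlen
    omega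
  have hterm : ∀ k ∈ Finset.range ((lcp g.toWord h.toWord).length + 1),
      xi r g (FreeGroup.mk ((lcp g.toWord h.toWord).take k))
        * xi r h (FreeGroup.mk ((lcp g.toWord h.toWord).take k))
      = (if k = 0 then r ^ g.norm else Real.sqrt (1 - r ^ 2) * r ^ (g.norm - k)) *
        (if k = 0 then r ^ h.norm else Real.sqrt (1 - r ^ 2) * r ^ (h.norm - k)) := by
    intro k hk
    have hkm : k ≤ (lcp g.toWord h.toWord).length :=
      Nat.lt_succ_iff.mp (Finset.mem_range.mp hk)
    simp only [xi, hsub]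
    rw [if_pos (((lcp g.toWord h.toWord).take_prefix k).trans hpu),
      if_pos (((lcp g.toWord h.toWord).take_prefix k).trans hpv)]
    rw [List.length_take]
    have hmin : min k (lcp g.toWord h.toWord).length = k := by omega
    rw [hmin]
  rw [Finset.sum_congr rfl hterm,
    geom_sum r hr0 hr1 (lcp g.toWord h.toWord).length g.norm h.norm hma hmb,
    norm_inv_mul g h]
  have hng : g.norm = g.toWord.length := rfl
  have hnh : h.norm = h.toWord.length := rfl
  congr 1
  omega

end HaagerupAux

open HaagerupAux Matrix in
/-- **Haagerup's theorem**: on the free group `F₂`, for every `t > 0` the function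
`g ↦ exp(-t ℓ(g))`, where `ℓ(g)` is the reduced word length, is positive definite. -/
theorem haagerup_exp_neg_length_posDef (t : ℝ) (ht : 0 < t) :
    IsPosDefFn fun g : FreeGroup (Fin 2) => (Real.exp (-t * g.norm) : ℂ) := by
  classical
  intro n g
  set r := Real.exp (-t) with hr
  have hr0 : 0 < r := Real.exp_pos _
  have hr1 : r ≤ 1 := Real.exp_le_one_iff.mpr (by linarith)
  set S : Finset (FreeGroup (Fin 2)) := Finset.univ.biUnion (fun i => prefs (g i)) with hS
  set B : Matrix {w // w ∈ S} (Fin n) ℂ :=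
    Matrix.of fun w i => ((xi r (g i) (w : FreeGroup (Fin 2)) : ℝ) : ℂ) with hB
  have hM : (Matrix.of fun i j : Fin n =>
      ((Real.exp (-t * ((g i)⁻¹ * g j).norm) : ℝ) : ℂ)) = Bᴴ * B := by
    ext i j
    rw [Matrix.mul_apply, Matrix.of_apply]
    have hexp : Real.exp (-t * (((g i)⁻¹ * g j).norm : ℝ)) = r ^ ((g i)⁻¹ * g j).norm := by
      rw [show -t * ((((g i)⁻¹ * g j).norm : ℕ) : ℝ)
          = ((((g i)⁻¹ * g j).norm : ℕ) : ℝ) * (-t) by ring, Real.exp_nat_mul]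
    rw [hexp, ← gram r hr0 hr1 (g i) (g j) S
      (hS ▸ Finset.subset_biUnion_of_mem (fun i => prefs (g i)) (Finset.mem_univ i))]
    rw [← Finset.sum_coe_sort S (fun w => xi r (g i) w * xi r (g j) w)]
    push_cast
    refine Finset.sum_congr rfl fun w _ => ?_
    simp only [hB, Matrix.conjTranspose_apply, Matrix.of_apply, RCLike.star_def,
      Complex.conj_ofReal]
  rw [hM]
  exact Matrix.posSemidef_conjTranspose_mul_self B
end

section
/- Let G be a countable group and H a subgroup of G of finite index. If there exists a sequence (φₙ) of normalized positive definite functions on H, each vanishing at infinity, with φₙ(h) → 1 for every h ∈ H, then there exists such a sequence on G: normalized positive definite functions on G, each vanishing at infinity, converging pointwise to 1. (The Haagerup approximation property passes from a finite-index subgroup to the ambient group.) -/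
open Filter
open scoped ComplexOrder

lemma psd_add' {n : Type*} [Fintype n] {A B : Matrix n n ℂ} (hA : A.PosSemidef)
    (hB : B.PosSemidef) : (A + B).PosSemidef := by
  exact hA.add hB

lemma psd_sum' {ι n : Type*} [Fintype n] (s : Finset ι) (A : ι → Matrix n n ℂ)
    (h : ∀ i ∈ s, (A i).PosSemidef) : (∑ i ∈ s, A i).PosSemidef := by
  classical
  induction s using Finset.induction with
  | empty => simpa using Matrix.PosSemidef.zero
  | insert _ _ hx ih =>
    rw [Finset.sum_insert hx]
    exact psd_add' (h _ (Finset.mem_insert_self _ _))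
      (ih fun i hi => h i (Finset.mem_insert_of_mem hi))

lemma psd_smul' {n : Type*} [Fintype n] {r : ℝ} (hr : 0 ≤ r) {A : Matrix n n ℂ}
    (hA : A.PosSemidef) : (((r : ℂ)) • A).PosSemidef := by
  refine ⟨?_, fun x => ?_⟩
  · unfold Matrix.IsHermitian
    rw [Matrix.conjTranspose_smul, hA.1]
    simp
  · exact (hA.smul (a := (r : ℂ)) (by exact_mod_cast Complex.zero_le_real.2 hr)).2 x

/-- The Haagerup approximation property passes from a finite-index subgroup to the
ambient countable group. -/
theorem haagerup_property_of_finiteIndex_subgroup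
    {G : Type*} [Group G] [Countable G] (H : Subgroup G) (hH : H.FiniteIndex)
    (hHaag : ∃ φ : ℕ → H → ℂ,
      (∀ n, IsPosDefFn (φ n)) ∧ (∀ n, φ n 1 = 1) ∧
      (∀ n, ∀ ε : ℝ, 0 < ε → {h : H | ε ≤ ‖φ n h‖}.Finite) ∧
      ∀ h : H, Tendsto (fun n => φ n h) atTop (nhds 1)) :
    ∃ ψ : ℕ → G → ℂ,
      (∀ n, IsPosDefFn (ψ n)) ∧ (∀ n, ψ n 1 = 1) ∧
      (∀ n, ∀ ε : ℝ, 0 < ε → {g : G | ε ≤ ‖ψ n g‖}.Finite) ∧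
      ∀ g : G, Tendsto (fun n => ψ n g) atTop (nhds 1) := by
  classical
  obtain ⟨φ, hpd, hnorm, hc0, hlim⟩ := hHaag
  haveI : Fintype (G ⧸ H) := H.fintypeQuotientOfFiniteIndex
  set k : ℕ := Fintype.card (G ⧸ H) with hkdef
  have hk : 0 < k := Fintype.card_pos
  have hkR : ((k : ℝ)) ≠ 0 := by positivity
  have mem : ∀ (g : G) (C : G ⧸ H), ((g • C).out⁻¹ * (g * C.out)) ∈ H := by
    intro g C
    rw [← QuotientGroup.eq, QuotientGroup.out_eq']
    conv_lhs => rw [← QuotientGroup.out_eq' C]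
    exact MulAction.Quotient.smul_mk H g C.out
  set c : G → (G ⧸ H) → H := fun g C => ⟨(g • C).out⁻¹ * (g * C.out), mem g C⟩ with hc
  have c_one : ∀ C, c 1 C = 1 := by
    intro C
    ext
    simp [hc]
  have c_key : ∀ (g g' : G) (C : G ⧸ H),
      c (g⁻¹ * g') C = (c g (g⁻¹ • (g' • C)))⁻¹ * c g' C := by
    intro g g' C
    ext
    push_cast [hc]
    rw [smul_inv_smul, mul_smul]
    group
  have c_eq : ∀ (g : G) (C : G ⧸ H), g = (g • C).out * (c g C : G) * C.out⁻¹ := by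
    intro g C
    simp [hc, mul_assoc]
  set ψ : ℕ → G → ℂ := fun n g => (((k : ℝ)⁻¹ : ℝ) : ℂ) * ∑ C : G ⧸ H, φ n (c g C) with hψ
  refine ⟨ψ, ?_, ?_, ?_, ?_⟩
  · -- positive definiteness
    intro n m g
    have hmat : (Matrix.of fun i j : Fin m => ψ n ((g i)⁻¹ * g j))
        = (((k : ℝ)⁻¹ : ℝ) : ℂ) • ∑ D : G ⧸ H,
            Matrix.of (fun i j : Fin m =>
              φ n ((c (g i) ((g i)⁻¹ • D))⁻¹ * (c (g j) ((g j)⁻¹ • D)))) := by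
      ext i j
      simp only [Matrix.smul_apply, Matrix.sum_apply, Matrix.of_apply, smul_eq_mul, hψ]
      congr 1
      rw [← Equiv.sum_comp (MulAction.toPerm (g j))
        (fun D => φ n ((c (g i) ((g i)⁻¹ • D))⁻¹ * (c (g j) ((g j)⁻¹ • D))))]
      refine Finset.sum_congr rfl fun C _ => ?_
      simp only [MulAction.toPerm_apply, inv_smul_smul]
      rw [c_key (g i) (g j) C]
    rw [hmat]
    refine psd_smul' (by positivity) (psd_sum' _ _ fun D _ => ?_)
    exact hpd n m fun i => c (g i) ((g i)⁻¹ • D)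
  · -- normalization
    intro n
    have h1 : ∀ C ∈ Finset.univ, φ n (c (1 : G) C) = 1 := fun C _ => by
      rw [c_one, hnorm n]
    simp only [hψ]
    rw [Finset.sum_congr rfl h1, Finset.sum_const, Finset.card_univ, ← hkdef,
      nsmul_eq_mul, mul_one]
    push_cast
    field_simp
  · -- c₀
    intro n ε hε
    have hS := hc0 n ε hε
    haveI := hS.to_subtype
    refine Set.Finite.subset (Set.finite_range
      (fun p : (G ⧸ H) × (G ⧸ H) × {h : H | ε ≤ ‖φ n h‖} =>
        p.1.out * ((p.2.2 : H) : G) * p.2.1.out⁻¹)) ?_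
    intro x hx
    have hx' : ε ≤ ‖ψ n x‖ := hx
    have hex : ∃ C : G ⧸ H, ε ≤ ‖φ n (c x C)‖ := by
      by_contra hcon
      push_neg at hcon
      have h1 : ‖ψ n x‖ ≤ (k : ℝ)⁻¹ * ∑ C : G ⧸ H, ‖φ n (c x C)‖ := by
        rw [hψ]
        simp only []
        rw [norm_mul, Complex.norm_real, Real.norm_of_nonneg (by positivity)]
        gcongr
        exact norm_sum_le _ _
      have h2 : ∑ C : G ⧸ H, ‖φ n (c x C)‖ < ∑ _C : G ⧸ H, ε :=
        Finset.sum_lt_sum_of_nonempty Finset.univ_nonempty fun C _ => hcon C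
      rw [Finset.sum_const, Finset.card_univ, ← hkdef, nsmul_eq_mul] at h2
      have h3 : ‖ψ n x‖ < (k : ℝ)⁻¹ * (k * ε) := by
        refine lt_of_le_of_lt h1 ?_
        exact mul_lt_mul_of_pos_left h2 (by positivity)
      rw [← mul_assoc, inv_mul_cancel₀ hkR, one_mul] at h3
      linarith
    obtain ⟨C, hC⟩ := hex
    exact ⟨(x • C, C, ⟨c x C, hC⟩), (c_eq x C).symm⟩
  · -- pointwise convergence
    intro g
    have h1 : Tendsto (fun n => ∑ C : G ⧸ H, φ n (c g C)) atTop
        (nhds (∑ _C : G ⧸ H, (1 : ℂ))) :=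
      tendsto_finset_sum _ fun C _ => hlim (c g C)
    have h2 := h1.const_mul ((((k : ℝ)⁻¹ : ℝ) : ℂ))
    simp only [Finset.sum_const, Finset.card_univ, ← hkdef, nsmul_eq_mul, mul_one] at h2
    have key : (((k : ℝ)⁻¹ : ℝ) : ℂ) * ((k : ℕ) : ℂ) = 1 := by
      push_cast
      field_simp
    rw [show (1 : ℂ) = (((k : ℝ)⁻¹ : ℝ) : ℂ) * ((k : ℕ) : ℂ) from key.symm]
    exact h2
end
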